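/- For p ≥ 2, the restriction of the simplicial boundary map d_p^C of X(Z_2^n) (with F_2 coefficients) to the subspace D_p spanned by the class-sums [σ] equals the map d_p^D; i.e., for every p-simplex σ = {α_1,...,α_{p+1}}, d_p^C(Σ_{σ'~σ} σ') = [(σ \ {α_1}) + α_1] + Σ_{i=1}^{p+1} [σ \ {α_i}]. -/

import Mathlib

open Finset

attribute [local instance] Classical.propDecidable

abbrev V (n : ℕ) : Type := Fin n → ZMod 2

def LinIndep {n : ℕ} (s : Finset (V n)) : Prop :=
  LinearIndependent (ZMod 2) (fun x : (s : Set (V n)) => (x : V n))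

def IsSimplex (n p : ℕ) (σ : Finset (V n)) : Prop :=
  σ.card = p + 1 ∧ LinIndep σ

def shift {n : ℕ} (σ : Finset (V n)) (α : V n) : Finset (V n) :=
  σ.image (· + α)

def SimpRel {n : ℕ} (σ σ' : Finset (V n)) : Prop :=
  σ = σ' ∨ ∃ α : V n, σ ∩ σ' = {α} ∧ shift (σ \ {α}) α = σ' \ {α}

/-- The class sum `[σ] = ∑_{σ' ~ σ} σ'`, a simplicial chain over `F_2`. -/
noncomputable def classSum {n : ℕ} (σ : Finset (V n)) : Finset (V n) →₀ ZMod 2 :=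
  ∑ σ' ∈ Finset.univ.filter (fun σ' => SimpRel σ σ'), Finsupp.single σ' 1

/-- The value `d_p^D([σ])` computed using the chosen element `α ∈ σ`:
`[(σ \ {α}) + α] + ∑_{β ∈ σ} [σ \ {β}]`. -/
noncomputable def dDat {n : ℕ} (σ : Finset (V n)) (α : V n) : Finset (V n) →₀ ZMod 2 :=
  classSum (shift (σ \ {α}) α) + ∑ β ∈ σ, classSum (σ \ {β})

/-- The simplicial boundary map over `F_2`: a single simplex is sent to the sum of its
codimension-one faces. -/
noncomputable def dC (n : ℕ) :
    (Finset (V n) →₀ ZMod 2) →ₗ[ZMod 2] (Finset (V n) →₀ ZMod 2) :=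
  Finsupp.lsum (ZMod 2) fun τ =>
    LinearMap.toSpanSingleton (ZMod 2) _
      (∑ x ∈ τ, Finsupp.single (τ \ {x}) (1 : ZMod 2))

/-!
Over `F_2`, a linearly independent set `s` is sum-free (`a + b ∉ s` for `a, b ∈ s`). For such
`s` with at least two elements, the simplices related to `s` are `s` and its pivots
`pivot s γ = {γ} ∪ ((s \ {γ}) + γ)`, `γ ∈ s`, all distinct. The boundary of `pivot s γ` is
`(s \ {γ}) + γ` plus the pivots at `γ` of the faces `s \ {y}`. So `d [σ]` splits into the faces
of `σ` and the pivots of those faces, which make up `∑ β, [σ \ {β}]`, and the sets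
`(σ \ {γ}) + γ`, `γ ∈ σ`, which are the members of `[(σ \ {α}) + α]`, since pivoting
`(σ \ {α}) + α` at `γ + α` gives `(σ \ {γ}) + γ`. The set `(σ \ {α}) + α` is sum-free because
`(y + α) + (z + α) = w + α` would be a relation `y + z + w + α = 0` in which `α` occurs once.
-/

section LinearIndependence

variable {M : Type*} [AddCommGroup M] {s : Set M}

lemma LinearIndepOn.add_add_add_ne_zero {R : Type*} [Ring R] [Nontrivial R] [Module R M]
    (hs : LinearIndepOn R id s) {a b c d : M} (ha : a ∈ s) (hb : b ∈ s) (hc : c ∈ s)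
    (hd : d ∈ s) (hda : d ≠ a) (hdb : d ≠ b) (hdc : d ≠ c) : a + b + c + d ≠ 0 := by
  intro h
  let l : M →₀ R := .single a 1 + .single b 1 + .single c 1 + .single d 1
  have hsupp : l ∈ Finsupp.supported R R s := by
    have hsingle {x : M} (hx : x ∈ s) := Finsupp.single_mem_supported R (1 : R) hx
    exact add_mem (add_mem (add_mem (hsingle ha) (hsingle hb)) (hsingle hc)) (hsingle hd)
  have hl : l = 0 := linearIndepOn_iff.1 hs l hsupp (by simpa [l] using h)
  simpa [l, Finsupp.single_apply, hda.symm, hdb.symm, hdc.symm] using congrArg (· d) hl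

lemma LinearIndepOn.add_add_ne_zero [Module (ZMod 2) M] (hs : LinearIndepOn (ZMod 2) id s)
    {a b c : M} (ha : a ∈ s) (hb : b ∈ s) (hc : c ∈ s) : a + b + c ≠ 0 := by
  intro h
  let l : M →₀ ZMod 2 := .single a 1 + .single b 1 + .single c 1
  have hsupp : l ∈ Finsupp.supported (ZMod 2) (ZMod 2) s := by
    have hsingle {x : M} (hx : x ∈ s) := Finsupp.single_mem_supported (ZMod 2) (1 : ZMod 2) hx
    exact add_mem (add_mem (hsingle ha) (hsingle hb)) (hsingle hc)
  have hl : l = 0 := linearIndepOn_iff.1 hs l hsupp (by simpa [l] using h)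
  -- the coefficients of `l` add up to `3 ≠ 0`
  have htotal := congrArg (Finsupp.linearCombination (ZMod 2) fun _ => (1 : ZMod 2)) hl
  simp only [l, map_add, Finsupp.linearCombination_single, smul_eq_mul, mul_one,
    map_zero] at htotal
  exact absurd htotal (by decide)

end LinearIndependence

namespace ZModModule

variable {M : Type*} [AddCommGroup M] [Module (ZMod 2) M]

lemma add_add_cancel_right (x a : M) : x + a + a = x := by
  rw [add_assoc, add_self, add_zero]

lemma add_eq_iff_eq_add {x y a : M} : x + a = y ↔ x = y + a := by
  rw [← sub_eq_add, sub_eq_iff_eq_add]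

end ZModModule

def IsSumFree {M : Type*} [Add M] (s : Finset M) : Prop :=
  ∀ a ∈ s, ∀ b ∈ s, a + b ∉ s

lemma IsSumFree.mono {M : Type*} [Add M] {s t : Finset M} (hs : IsSumFree s) (hts : t ⊆ s) :
    IsSumFree t :=
  fun a ha b hb hab => hs a (hts ha) b (hts hb) (hts hab)

lemma IsSumFree.zero_notMem {M : Type*} [AddZeroClass M] {s : Finset M} (hs : IsSumFree s) :
    (0 : M) ∉ s :=
  fun h => hs 0 h 0 h (by rwa [add_zero])

section simplex

variable {n : ℕ} {s : Finset (V n)} {α γ : V n}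

lemma mem_shift {a x : V n} : x ∈ shift s a ↔ x + a ∈ s := by
  refine ⟨fun h => ?_, fun h => mem_image.2 ⟨x + a, h, ZModModule.add_add_cancel_right x a⟩⟩
  obtain ⟨y, hy, rfl⟩ := mem_image.1 h
  rwa [ZModModule.add_add_cancel_right]

lemma card_shift (s : Finset (V n)) (a : V n) : #(shift s a) = #s :=
  card_image_of_injective _ (add_left_injective a)

lemma LinIndep.isSumFree (hli : LinIndep s) : IsSumFree s := by
  intro a ha b hb hab
  refine LinearIndepOn.add_add_ne_zero hli ha hb hab ?_
  rw [ZModModule.add_self]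

lemma LinIndep.isSumFree_shift (hli : LinIndep s) (hα : α ∈ s) :
    IsSumFree (shift (s \ {α}) α) := by
  intro a ha b hb hab
  simp only [mem_shift, mem_sdiff, mem_singleton] at ha hb hab
  refine LinearIndepOn.add_add_add_ne_zero hli ha.1 hb.1 hab.1 hα ?_ ?_ ?_ ?_
  · exact fun h => ha.2 h.symm
  · exact fun h => hb.2 h.symm
  · exact fun h => hab.2 h.symm
  · simp only [← ZModModule.sub_eq_add]; abel

def pivot (s : Finset (V n)) (γ : V n) : Finset (V n) :=
  insert γ (shift (s \ {γ}) γ)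

lemma mem_pivot {x : V n} : x ∈ pivot s γ ↔ x = γ ∨ x + γ ∈ s ∧ x ≠ 0 := by
  simp [pivot, mem_shift]

lemma pivot_sdiff_self (h0 : (0 : V n) ∉ s) : pivot s γ \ {γ} = shift (s \ {γ}) γ := by
  ext x
  simp only [mem_sdiff, mem_pivot, mem_shift, mem_singleton, add_eq_right]
  constructor
  · rintro ⟨rfl | h, hx⟩
    · exact absurd rfl hx
    · exact h
  · rintro ⟨hx, hx0⟩
    refine ⟨Or.inr ⟨hx, hx0⟩, ?_⟩
    rintro rfl
    exact h0 (by rwa [ZModModule.add_self] at hx)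

lemma inter_pivot (hs : IsSumFree s) (hγ : γ ∈ s) : s ∩ pivot s γ = {γ} := by
  ext x
  simp only [mem_inter, mem_pivot, mem_singleton]
  constructor
  · rintro ⟨hx, rfl | ⟨hxγ, -⟩⟩
    · rfl
    · exact absurd hxγ (hs x hx γ hγ)
  · rintro rfl
    exact ⟨hγ, Or.inl rfl⟩

lemma pivot_ne_self (hs : IsSumFree s) (hγ : γ ∈ s) (hcard : 1 < #s) : pivot s γ ≠ s := by
  intro h
  obtain ⟨y, hy, hyγ⟩ := exists_mem_ne hcard γ
  have : y + γ ∈ pivot s γ := by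
    rw [mem_pivot, ZModModule.add_add_cancel_right]
    exact Or.inr ⟨hy, by rwa [Ne, ZModModule.add_eq_iff_eq_add, zero_add]⟩
  exact hs y hy γ hγ (h ▸ this)

lemma pivot_sdiff_add {y : V n} (hy : y ≠ 0) : pivot s γ \ {y + γ} = pivot (s \ {y}) γ := by
  ext x
  have hγ : γ ≠ y + γ := fun h => hy (add_eq_right.1 h.symm)
  simp only [mem_sdiff, mem_pivot, mem_singleton, ZModModule.add_eq_iff_eq_add]
  by_cases hx : x = γ
  · simp [hx, hγ]
  · simp only [hx, false_or]
    tauto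

lemma pivot_shift (hα : α ∈ s) (hγα : γ ≠ α) :
    pivot (shift (s \ {α}) α) (γ + α) = shift (s \ {γ}) γ := by
  ext x
  simp only [mem_sdiff, mem_pivot, mem_shift, mem_singleton, ← add_assoc,
    ZModModule.add_add_cancel_right, ZModModule.add_eq_iff_eq_add, ZModModule.add_self]
  by_cases hx : x = γ + α
  · subst hx
    simp only [true_or, true_iff, add_right_comm γ α γ, ZModModule.add_self, zero_add]
    exact ⟨hα, fun h => hγα (by rwa [ZModModule.add_eq_iff_eq_add, zero_add] at h)⟩
  · simp only [hx, false_or, add_comm α γ]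
    tauto

lemma simpRel_iff (hs : IsSumFree s) (σ' : Finset (V n)) :
    SimpRel s σ' ↔ σ' = s ∨ ∃ γ ∈ s, pivot s γ = σ' := by
  constructor
  · rintro (rfl | ⟨γ, hinter, hshift⟩)
    · exact Or.inl rfl
    · have hγ : γ ∈ s ∩ σ' := hinter ▸ mem_singleton_self γ
      refine Or.inr ⟨γ, (mem_inter.1 hγ).1, ?_⟩
      rw [pivot, hshift, sdiff_singleton_eq_erase, insert_erase (mem_inter.1 hγ).2]
  · rintro (rfl | ⟨γ, hγ, rfl⟩)
    · exact Or.inl rfl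
    · exact Or.inr ⟨γ, inter_pivot hs hγ, (pivot_sdiff_self hs.zero_notMem).symm⟩

lemma classSum_eq (hs : IsSumFree s) (hcard : 1 < #s) :
    classSum s = Finsupp.single s 1 + ∑ γ ∈ s, Finsupp.single (pivot s γ) 1 := by
  have hclass : univ.filter (SimpRel s) = insert s (s.image (pivot s)) := by
    ext τ
    simp [simpRel_iff hs]
  have hinj : Set.InjOn (pivot s) s := fun x hx y hy hxy => by
    have : y ∈ s ∩ pivot s x := mem_inter.2 ⟨hy, hxy ▸ mem_insert_self y _⟩
    rwa [inter_pivot hs hx, mem_singleton, eq_comm] at this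
  have hnotMem : s ∉ s.image (pivot s) := by
    simpa using fun γ hγ => pivot_ne_self hs hγ hcard
  rw [classSum, hclass, sum_insert hnotMem, sum_image hinj]

lemma dC_single (τ : Finset (V n)) :
    dC n (Finsupp.single τ 1) = ∑ x ∈ τ, Finsupp.single (τ \ {x}) 1 := by
  rw [dC, Finsupp.lsum_single, LinearMap.toSpanSingleton_apply, one_smul]

lemma dC_single_pivot (h0 : (0 : V n) ∉ s) (γ : V n) :
    dC n (Finsupp.single (pivot s γ) 1) =
      Finsupp.single (shift (s \ {γ}) γ) 1 +
        ∑ y ∈ s \ {γ}, Finsupp.single (pivot (s \ {y}) γ) 1 := by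
  have hγ : γ ∉ shift (s \ {γ}) γ := by
    rw [mem_shift, ZModModule.add_self]
    exact fun h => h0 (mem_sdiff.1 h).1
  rw [dC_single, pivot, sum_insert hγ, ← pivot, pivot_sdiff_self h0, shift,
    sum_image fun x _ y _ h => add_left_injective γ h]
  refine congrArg _ (sum_congr rfl fun y hy => ?_)
  rw [pivot_sdiff_add (ne_of_mem_of_not_mem (mem_sdiff.1 hy).1 h0)]

lemma classSum_shift (hli : LinIndep s) (hα : α ∈ s) (hcard : 2 < #s) :
    classSum (shift (s \ {α}) α) = ∑ γ ∈ s, Finsupp.single (shift (s \ {γ}) γ) 1 := by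
  have hcard' : 1 < #(shift (s \ {α}) α) := by
    rw [card_shift, card_sdiff_of_subset (singleton_subset_iff.2 hα), card_singleton]
    omega
  rw [classSum_eq (hli.isSumFree_shift hα) hcard', ← add_sum_erase s _ hα, shift,
    sum_image fun x _ y _ h => add_left_injective α h, ← shift, sdiff_singleton_eq_erase]
  refine congrArg _ (sum_congr rfl fun γ hγ => ?_)
  rw [← sdiff_singleton_eq_erase, pivot_shift hα (ne_of_mem_erase hγ)]

end simplex

/-- for `p ≥ 2`, the simplicial boundary of the class sum `[σ]` equals
`d_p^D([σ]) = [(σ \ {α}) + α] + ∑_i [σ \ {α_i}]`. -/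
theorem stmt6 (n p : ℕ) (hp : 2 ≤ p) (σ : Finset (V n)) (hσ : IsSimplex n p σ)
    (α : V n) (hα : α ∈ σ) :
    dC n (classSum σ) = dDat σ α := by
  obtain ⟨hcard, hli⟩ := hσ
  have hs := hli.isSumFree
  have hface : ∀ β ∈ σ, classSum (σ \ {β}) =
      Finsupp.single (σ \ {β}) 1 + ∑ γ ∈ σ \ {β}, Finsupp.single (pivot (σ \ {β}) γ) 1 :=
    fun β hβ => classSum_eq (hs.mono sdiff_subset) (by
      rw [card_sdiff_of_subset (singleton_subset_iff.2 hβ), card_singleton]; omega)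
  rw [classSum_eq hs (by omega), map_add, map_sum, dC_single,
    sum_congr rfl fun γ _ => dC_single_pivot hs.zero_notMem γ, sum_add_distrib, dDat,
    classSum_shift hli hα (by omega), sum_congr rfl hface, sum_add_distrib,
    sum_comm' (t' := σ) (s' := fun y => σ \ {y})
      (by simp only [mem_sdiff, mem_singleton]; tauto)]
  abel
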